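/- Let F be a field of characteristic 2, let (A,σ) be a central simple F-algebra with orthogonal involution, and let K/F be a separable quadratic field extension (i.e. [K:F] = 2 and K/F is separable). Then S(A_K, σ_K) equals the K-subspace of A_K = A ⊗_F K spanned by the elements x ⊗ 1 with x ∈ S(A,σ). -/

import Mathlib

open scoped TensorProduct

/-- `Alt(A,σ) = {x - σ(x) : x ∈ A}`. -/
def altSet {F A : Type*} [Field F] [Ring A] [Algebra F A] (σ : A →ₗ[F] A) : Set A :=
  {y | ∃ x : A, y = x - σ x}

/-- `S(A,σ) = {x ∈ A : σ(x)x ∈ F·1 + Alt(A,σ)}`. -/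
def sSet {F A : Type*} [Field F] [Ring A] [Algebra F A] (σ : A →ₗ[F] A) : Set A :=
  {x | ∃ α : F, σ x * x - algebraMap F A α ∈ altSet σ}

/-- An involution of the first kind is orthogonal if `Alt(A,σ) ∩ F·1 = {0}`. -/
def IsOrthogonal {F A : Type*} [Field F] [Ring A] [Algebra F A] (σ : A →ₗ[F] A) : Prop :=
  altSet σ ∩ Set.range (algebraMap F A) = {0}


/-!
A separable quadratic extension in characteristic 2 has an Artin–Schreier generator `δ`,
`δ² = δ + a` with `a ∈ F`. Write `z ∈ A_K` as `1 ⊗ x + δ ⊗ y`. The coordinates of `σ_K(z) z` in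
the basis `1, δ` are `σ(x)x + a σ(y)y` and `σ(y)y + (σ(x)y + σ(y)x)`, where the bracket lies in
`Alt(A,σ)` because the characteristic is 2. Since the coordinate maps send `K + Alt(A_K,σ_K)` into
`F + Alt(A,σ)`, both `x` and `y` lie in `S(A,σ)`. Conversely, in characteristic 2 `S(A_K,σ_K)` is a
`K`-subspace, hence contains the span.
-/

open TensorProduct

lemma sub_eq_add_of_charTwo (F : Type*) {M : Type*} [Field F] [CharP F 2] [AddCommGroup M]
    [Module F M] (x y : M) : x - y = x + y := by
  rw [sub_eq_add_neg, ← neg_one_smul F y, CharTwo.neg_eq, one_smul]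

section Alt

variable {F A : Type*} [Field F] [Ring A] [Algebra F A] (σ : A →ₗ[F] A)

def altSubmodule : Submodule F A := LinearMap.range (LinearMap.id - σ)

lemma mem_altSubmodule {y : A} : y ∈ altSubmodule σ ↔ y ∈ altSet σ := by
  simp [altSubmodule, altSet, eq_comm]

lemma sub_mem_altSubmodule (x : A) : x - σ x ∈ altSubmodule σ :=
  (mem_altSubmodule σ).2 ⟨x, rfl⟩

lemma mem_sSet_iff {x : A} : x ∈ sSet σ ↔ σ x * x ∈ 1 ⊔ altSubmodule σ := by
  simp only [sSet, Submodule.mem_sup, Submodule.mem_one, ← mem_altSubmodule]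
  constructor
  · rintro ⟨α, hα⟩
    exact ⟨_, ⟨α, rfl⟩, _, hα, add_sub_cancel _ _⟩
  · rintro ⟨_, ⟨α, rfl⟩, y, hy, hxy⟩
    exact ⟨α, by rwa [← hxy, add_sub_cancel_left]⟩

variable [CharP F 2] {σ}

lemma mul_add_mul_mem_altSubmodule (hmul : ∀ x y : A, σ (x * y) = σ y * σ x)
    (hinv : ∀ x : A, σ (σ x) = x) (x y : A) : σ x * y + σ y * x ∈ altSubmodule σ := by
  have h := sub_mem_altSubmodule σ (σ y * x)
  rwa [hmul, hinv, sub_eq_add_of_charTwo F, add_comm] at h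

def sSubmodule (hmul : ∀ x y : A, σ (x * y) = σ y * σ x) (hinv : ∀ x : A, σ (σ x) = x) :
    Submodule F A where
  carrier := sSet σ
  add_mem' {x y} hx hy := by
    rw [mem_sSet_iff] at hx hy ⊢
    have h := add_mem (add_mem hx hy)
      (Submodule.mem_sup_right (mul_add_mul_mem_altSubmodule hmul hinv x y))
    convert h using 1
    simp only [map_add, add_mul, mul_add]
    abel
  zero_mem' := by simp [mem_sSet_iff]
  smul_mem' c x hx := by
    rw [mem_sSet_iff] at hx ⊢
    convert Submodule.smul_mem _ (c * c) hx using 1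
    rw [map_smul, smul_mul_smul_comm]

end Alt

section BaseChange

variable {F A K : Type*} [Field F] [Ring A] [Algebra F A] [Field K] [Algebra F K]
  {σ : A →ₗ[F] A}

lemma baseChange_mul (hmul : ∀ x y : A, σ (x * y) = σ y * σ x) (x y : K ⊗[F] A) :
    σ.baseChange K (x * y) = σ.baseChange K y * σ.baseChange K x := by
  induction x with
  | zero => simp
  | add x₁ x₂ h₁ h₂ => rw [add_mul, map_add, h₁, h₂, map_add, mul_add]
  | tmul k w =>
    induction y with
    | zero => simp
    | add y₁ y₂ h₁ h₂ => rw [mul_add, map_add, h₁, h₂, map_add, add_mul]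
    | tmul k' w' => simp [hmul, mul_comm k]

lemma baseChange_baseChange (hinv : ∀ x : A, σ (σ x) = x) (x : K ⊗[F] A) :
    σ.baseChange K (σ.baseChange K x) = x := by
  induction x with
  | zero => simp
  | add x₁ x₂ h₁ h₂ => rw [map_add, map_add, h₁, h₂]
  | tmul k w => simp [hinv]

lemma one_tmul_mem_sSet_baseChange {x : A} (hx : x ∈ sSet σ) :
    (1 : K) ⊗ₜ[F] x ∈ sSet (σ.baseChange K) := by
  obtain ⟨α, w, hw⟩ := hx
  refine ⟨algebraMap F K α, 1 ⊗ₜ w, ?_⟩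
  rw [LinearMap.baseChange_tmul, Algebra.TensorProduct.tmul_mul_tmul, one_mul,
    ← IsScalarTower.algebraMap_apply, Algebra.TensorProduct.algebraMap_apply', ← tmul_sub, hw,
    tmul_sub, LinearMap.baseChange_tmul]

lemma span_subset_sSet_baseChange [CharP F 2] (hmul : ∀ x y : A, σ (x * y) = σ y * σ x)
    (hinv : ∀ x : A, σ (σ x) = x) :
    ↑(Submodule.span K ((fun x : A => (1 : K) ⊗ₜ[F] x) '' sSet σ)) ⊆
      sSet (σ.baseChange K) := by
  have : CharP K 2 := charP_of_injective_algebraMap (algebraMap F K).injective 2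
  have hτmul := baseChange_mul (K := K) hmul
  have hτinv := baseChange_baseChange (K := K) hinv
  refine fun z hz ↦ (Submodule.span_le (p := sSubmodule hτmul hτinv)).2 ?_ hz
  rintro _ ⟨x, hx, rfl⟩
  exact one_tmul_mem_sSet_baseChange hx

end BaseChange

section Coordinates

variable {F A K ι : Type*} [Field F] [Ring A] [Algebra F A] [Field K] [Algebra F K]
  [DecidableEq ι] {σ : A →ₗ[F] A} (b : Module.Basis ι F K)

lemma equivFinsuppOfBasisLeft_baseChange (z : K ⊗[F] A) (i : ι) :
    equivFinsuppOfBasisLeft b (σ.baseChange K z) i = σ (equivFinsuppOfBasisLeft b z i) := by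
  induction z with
  | zero => simp
  | add z₁ z₂ h₁ h₂ => simp only [map_add, Finsupp.add_apply, h₁, h₂]
  | tmul k w =>
    simp only [LinearMap.baseChange_tmul, equivFinsuppOfBasisLeft_apply_tmul_apply, map_smul]

lemma equivFinsuppOfBasisLeft_mem_one_sup_altSubmodule {z : K ⊗[F] A}
    (hz : z ∈ 1 ⊔ altSubmodule (σ.baseChange K)) (i : ι) :
    equivFinsuppOfBasisLeft b z i ∈ 1 ⊔ altSubmodule σ := by
  simp only [Submodule.mem_sup, Submodule.mem_one, mem_altSubmodule, altSet] at hz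
  obtain ⟨_, ⟨γ, rfl⟩, _, ⟨w, rfl⟩, rfl⟩ := hz
  rw [map_add, Finsupp.add_apply]
  refine add_mem (Submodule.mem_sup_left ?_) (Submodule.mem_sup_right ?_)
  · rw [Submodule.mem_one]
    refine ⟨b.repr γ i, ?_⟩
    rw [Algebra.TensorProduct.algebraMap_apply, Algebra.algebraMap_self, RingHom.id_apply,
      equivFinsuppOfBasisLeft_apply_tmul_apply, Algebra.algebraMap_eq_smul_one]
  · rw [map_sub, Finsupp.sub_apply, equivFinsuppOfBasisLeft_baseChange]
    exact sub_mem_altSubmodule σ _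

end Coordinates

section Quadratic

variable {F K : Type*} [Field F] [Field K] [Algebra F K]

lemma exists_notMem_range_algebraMap (hK : Module.finrank F K = 2) :
    ∃ δ : K, δ ∉ Set.range (algebraMap F K) := by
  by_contra! h
  have : (⊥ : IntermediateField F K) = ⊤ :=
    eq_top_iff.2 fun x _ ↦ IntermediateField.mem_bot.2 (h x)
  rw [IntermediateField.bot_eq_top_iff_finrank_eq_one] at this
  omega

noncomputable def basisOfNotMemRange (hK : Module.finrank F K = 2) {δ : K}
    (hδ : δ ∉ Set.range (algebraMap F K)) : Module.Basis (Fin 2) F K :=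
  have : FiniteDimensional F K := Module.finite_of_finrank_eq_succ hK
  basisOfLinearIndependentOfCardEqFinrank
    ((LinearIndependent.pair_iff' one_ne_zero).2 fun a ha ↦
      hδ ⟨a, by rwa [Algebra.algebraMap_eq_smul_one]⟩)
    (by simp [hK])

lemma coe_basisOfNotMemRange (hK : Module.finrank F K = 2) {δ : K}
    (hδ : δ ∉ Set.range (algebraMap F K)) : ⇑(basisOfNotMemRange hK hδ) = ![1, δ] := by
  simp [basisOfNotMemRange]

lemma basisOfNotMemRange_repr_one (hK : Module.finrank F K = 2) {δ : K}
    (hδ : δ ∉ Set.range (algebraMap F K)) :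
    (basisOfNotMemRange hK hδ).repr 1 = Finsupp.single 0 1 := by
  simpa [coe_basisOfNotMemRange] using (basisOfNotMemRange hK hδ).repr_self 0

lemma basisOfNotMemRange_repr_self (hK : Module.finrank F K = 2) {δ : K}
    (hδ : δ ∉ Set.range (algebraMap F K)) :
    (basisOfNotMemRange hK hδ).repr δ = Finsupp.single 1 1 := by
  simpa [coe_basisOfNotMemRange] using (basisOfNotMemRange hK hδ).repr_self 1

lemma exists_mul_self_eq_add_algebraMap [CharP F 2] [Algebra.IsSeparable F K]
    (hK : Module.finrank F K = 2) :
    ∃ (δ : K) (a : F), δ ∉ Set.range (algebraMap F K) ∧ δ * δ = δ + algebraMap F K a := by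
  obtain ⟨δ, hδ⟩ := exists_notMem_range_algebraMap hK
  set b := basisOfNotMemRange hK hδ
  set a := b.repr (δ * δ) 0
  set c := b.repr (δ * δ) 1
  have hδδ : δ * δ = c • δ + algebraMap F K a := by
    conv_lhs => rw [← b.sum_repr (δ * δ)]
    rw [Fin.sum_univ_two, coe_basisOfNotMemRange, Algebra.algebraMap_eq_smul_one, add_comm]
    rfl
  have hc : c ≠ 0 := by
    intro hc
    apply hδ
    -- `δ` is separable, so `F⟮δ⟯ = F⟮δ²⟯`, and here `δ² ∈ F`
    have h := IntermediateField.adjoin_simple_eq_adjoin_pow_expChar_of_isSeparable' F K δ 2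
    rw [sq, hδδ, hc, zero_smul, zero_add,
      IntermediateField.adjoin_simple_eq_bot_iff.2 (IntermediateField.algebraMap_mem _ _),
      IntermediateField.adjoin_simple_eq_bot_iff] at h
    exact IntermediateField.mem_bot.1 h
  refine ⟨c⁻¹ • δ, c⁻¹ * c⁻¹ * a, fun ⟨r, hr⟩ ↦ hδ ⟨c * r, ?_⟩, ?_⟩
  · rw [map_mul, hr, Algebra.smul_def, ← mul_assoc, ← map_mul, mul_inv_cancel₀ hc, map_one,
      one_mul]
  · rw [smul_mul_smul_comm, hδδ, smul_add, smul_smul, Algebra.smul_def (c⁻¹ * c⁻¹), ← map_mul]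
    congr 2
    field_simp

end Quadratic

section QuadraticBaseChange

variable {F A K : Type*} [Field F] [Ring A] [Algebra F A] [Field K] [Algebra F K]
  {σ : A →ₗ[F] A}

lemma baseChange_mul_self_of_mul_self_eq {δ : K} {a : F} (hδ : δ * δ = δ + algebraMap F K a)
    (x y : A) :
    σ.baseChange K (1 ⊗ₜ x + δ ⊗ₜ y) * (1 ⊗ₜ x + δ ⊗ₜ y) =
      1 ⊗ₜ (σ x * x + a • (σ y * y)) + δ ⊗ₜ (σ y * y + (σ x * y + σ y * x)) := by
  simp only [map_add, LinearMap.baseChange_tmul, add_mul, mul_add,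
    Algebra.TensorProduct.tmul_mul_tmul, one_mul, mul_one, hδ, add_tmul, tmul_add,
    Algebra.algebraMap_eq_smul_one, smul_tmul]
  abel

lemma sSet_baseChange_subset_span [CharP F 2] (hmul : ∀ x y : A, σ (x * y) = σ y * σ x)
    (hinv : ∀ x : A, σ (σ x) = x) (hK : Module.finrank F K = 2) {δ : K} {a : F}
    (hδ : δ ∉ Set.range (algebraMap F K)) (hsq : δ * δ = δ + algebraMap F K a) :
    sSet (σ.baseChange K) ⊆ Submodule.span K ((fun x : A => (1 : K) ⊗ₜ[F] x) '' sSet σ) := by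
  set b := basisOfNotMemRange hK hδ
  intro z hz
  obtain ⟨x, y, rfl⟩ : ∃ x y : A, 1 ⊗ₜ x + δ ⊗ₜ y = z := by
    obtain ⟨c, rfl⟩ := TensorProduct.eq_repr_basis_left b z
    refine ⟨c 0, c 1, ?_⟩
    rw [Finsupp.sum_fintype _ _ (by simp), Fin.sum_univ_two, coe_basisOfNotMemRange]
    rfl
  have hcoord := equivFinsuppOfBasisLeft_mem_one_sup_altSubmodule b ((mem_sSet_iff _).1 hz)
  rw [baseChange_mul_self_of_mul_self_eq hsq] at hcoord
  have h₀ : σ x * x + a • (σ y * y) ∈ 1 ⊔ altSubmodule σ := by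
    simpa [b, basisOfNotMemRange_repr_one, basisOfNotMemRange_repr_self] using hcoord 0
  have h₁ : σ y * y + (σ x * y + σ y * x) ∈ 1 ⊔ altSubmodule σ := by
    simpa [b, basisOfNotMemRange_repr_one, basisOfNotMemRange_repr_self] using hcoord 1
  have hy : σ y * y ∈ 1 ⊔ altSubmodule σ := by
    simpa using sub_mem h₁ (Submodule.mem_sup_right (mul_add_mul_mem_altSubmodule hmul hinv x y))
  have hx : σ x * x ∈ 1 ⊔ altSubmodule σ := by
    simpa using sub_mem h₀ (Submodule.smul_mem _ a hy)
  rw [← mem_sSet_iff] at hx hy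
  refine add_mem (Submodule.subset_span ⟨x, hx, rfl⟩) ?_
  rw [← mul_one δ, ← smul_eq_mul, ← smul_tmul']
  exact Submodule.smul_mem _ δ (Submodule.subset_span ⟨y, hy, rfl⟩)

end QuadraticBaseChange

theorem stmt1_general {F A K : Type*} [Field F] [CharP F 2] [Ring A] [Algebra F A]
    (σ : A →ₗ[F] A) (hmul : ∀ x y : A, σ (x * y) = σ y * σ x) (hinv : ∀ x : A, σ (σ x) = x)
    [Field K] [Algebra F K] [Algebra.IsSeparable F K] (hdeg : Module.finrank F K = 2) :
    sSet (LinearMap.baseChange K σ) =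
      ↑(Submodule.span K ((fun x : A => (1 : K) ⊗ₜ[F] x) '' sSet σ)) := by
  obtain ⟨δ, a, hδ, hsq⟩ := exists_mul_self_eq_add_algebraMap hdeg
  exact (sSet_baseChange_subset_span hmul hinv hdeg hδ hsq).antisymm
    (span_subset_sSet_baseChange hmul hinv)

theorem stmt1 {F A K : Type*} [Field F] [CharP F 2] [Ring A] [Algebra F A]
    [FiniteDimensional F A]
    (hcentral : ∀ z : A, (∀ y : A, z * y = y * z) → ∃ a : F, algebraMap F A a = z)
    (hsimple : IsSimpleOrder (TwoSidedIdeal A))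
    (σ : A →ₗ[F] A) (hmul : ∀ x y : A, σ (x * y) = σ y * σ x) (hinv : ∀ x : A, σ (σ x) = x)
    (horth : IsOrthogonal σ)
    [Field K] [Algebra F K] [Algebra.IsSeparable F K] (hdeg : Module.finrank F K = 2) :
    sSet (LinearMap.baseChange K σ) =
      ↑(Submodule.span K ((fun x : A => (1 : K) ⊗ₜ[F] x) '' sSet σ)) :=
  stmt1_general σ hmul hinv hdeg
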